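/- For all complex numbers z with Re z > 0 and Im z > 0, one has Im(z/tanh z) > 0. -/

import Mathlib

/-!
Writing `z / tanh z = z · cosh z · conj (sinh z) / |sinh z|²` and using
`2 cosh z · sinh z̄ = sinh (z + z̄) - sinh (z - z̄) = sinh (2x) - i sin (2y)` for `z = x + iy`, one gets
`Im (z / tanh z) = (y sinh (2x) - x sin (2y)) / (2 |sinh z|²)`.
For `x, y > 0` the numerator is positive because `x sin (2y) < 2xy < y sinh (2x)`.
-/

open ComplexConjugate

theorem Real.mul_sin_lt_mul_sinh {x y : ℝ} (hx : 0 < x) (hy : 0 < y) :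
    x * sin y < y * sinh x :=
  calc x * sin y < x * y := mul_lt_mul_of_pos_left (sin_lt hy) hx
    _ = y * x := mul_comm x y
    _ < y * sinh x := mul_lt_mul_of_pos_left (self_lt_sinh_iff.2 hx) hy

namespace Complex

theorem cosh_mul_conj_sinh (z : ℂ) :
    cosh z * conj (sinh z) = (Real.sinh (2 * z.re) - Real.sin (2 * z.im) * I) / 2 := by
  have h : sinh (z + conj z) - sinh (z - conj z) = 2 * (cosh z * sinh (conj z)) := by
    rw [sinh_add, sinh_sub]; ring
  rw [add_conj, sub_conj, sinh_mul_I, sinh_conj, ← ofReal_sinh, ← ofReal_sin] at h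
  linear_combination -h / 2

theorem sinh_ne_zero_of_re_ne_zero {z : ℂ} (hz : z.re ≠ 0) : sinh z ≠ 0 := by
  intro h
  have hre : Real.sinh (2 * z.re) / 2 = 0 := by
    simpa [-ofReal_sinh, -ofReal_sin, h] using (congrArg re (cosh_mul_conj_sinh z)).symm
  simp [hz] at hre

-- Where `sinh z = 0` both sides are `0` by the convention `w / 0 = 0`.
theorem div_tanh_eq (z : ℂ) : z / tanh z = z * (cosh z * conj (sinh z)) / normSq (sinh z) := by
  rw [tanh_eq_sinh_div_cosh, div_div_eq_mul_div, div_eq_mul_inv _ (sinh z), inv_def]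
  push_cast
  ring

theorem im_div_tanh (z : ℂ) :
    (z / tanh z).im =
      (z.im * Real.sinh (2 * z.re) - z.re * Real.sin (2 * z.im)) / (2 * normSq (sinh z)) := by
  rw [div_tanh_eq, cosh_mul_conj_sinh, div_ofReal_im]
  simp only [mul_im, div_ofNat_im, div_ofNat_re, sub_im, sub_re, mul_re, ofReal_im, ofReal_re, I_im,
    I_re, mul_one, mul_zero, add_zero, zero_sub, sub_self, sub_zero]
  field_simp
  ring

end Complex

theorem im_div_tanh_pos (z : ℂ) (hre : 0 < z.re) (him : 0 < z.im) :
    0 < (z / Complex.tanh z).im := by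
  rw [Complex.im_div_tanh]
  have hnum := Real.mul_sin_lt_mul_sinh (mul_pos two_pos hre) (mul_pos two_pos him)
  have hden := Complex.normSq_pos.2 (Complex.sinh_ne_zero_of_re_ne_zero hre.ne')
  apply div_pos <;> linarith
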